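/- arXiv:1910.02665 — 4 statements merged into one kernel-verified Lean document; each statement's English description precedes it below -/
import Mathlib

section
/- Let real numbers δ > 0, α ≥ 1 satisfy δ ≥ 100α and a nonnegative integer s satisfy s·(2δ/5 − (s−1)) ≤ αδ. Then either s ≤ 3α or s ≥ δ/5. -/
/-! The left-hand side is a concave quadratic in `s`, so strictly between `3α` and `δ/5` it exceeds
the smaller of its two endpoint values, and `δ ≥ 100α` makes both of those at least `αδ`. -/

theorem lt_mul_sub_of_mem_Ioo {a b c m x : ℝ} (hx : x ∈ Set.Ioo a b)
    (ha : m ≤ a * (c - a)) (hb : m ≤ b * (c - b)) : m < x * (c - x) := by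
  obtain ⟨hax, hxb⟩ := hx
  have interpolation : (b - a) * (x * (c - x)) =
      (b - x) * (a * (c - a)) + (x - a) * (b * (c - b)) + (b - a) * ((x - a) * (b - x)) := by
    ring
  have hgap : 0 < (b - a) * ((x - a) * (b - x)) :=
    mul_pos (by linarith) (mul_pos (by linarith) (by linarith))
  have weighted_a := mul_le_mul_of_nonneg_left ha (by linarith : 0 ≤ b - x)
  have weighted_b := mul_le_mul_of_nonneg_left hb (by linarith : 0 ≤ x - a)
  refine lt_of_mul_lt_mul_left ?_ (by linarith : 0 ≤ b - a)
  linarith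

theorem stmt_1_general (δ α : ℝ) (hα : 1 ≤ α) (hδα : 100 * α ≤ δ)
    (s : ℕ) (hs : (s : ℝ) * (2 * δ / 5 - ((s : ℝ) - 1)) ≤ α * δ) :
    (s : ℝ) ≤ 3 * α ∨ δ / 5 ≤ (s : ℝ) := by
  by_contra! h
  have h_at_left : α * δ ≤ 3 * α * (2 * δ / 5 + 1 - 3 * α) := by nlinarith
  have h_at_right : α * δ ≤ δ / 5 * (2 * δ / 5 + 1 - δ / 5) := by nlinarith
  have hmid := lt_mul_sub_of_mem_Ioo h h_at_left h_at_right
  linarith [show (s : ℝ) * (2 * δ / 5 - ((s : ℝ) - 1)) = s * (2 * δ / 5 + 1 - s) by ring]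

/-- Quadratic-inequality core of the trimming lemma: if `δ > 0`, `α ≥ 1`, `δ ≥ 100α`
and a natural number `s` satisfies `s·(2δ/5 − (s−1)) ≤ αδ`, then `s ≤ 3α` or `s ≥ δ/5`. -/
theorem stmt_1 (δ α : ℝ) (hδ : 0 < δ) (hα : 1 ≤ α) (hδα : 100 * α ≤ δ)
    (s : ℕ) (hs : (s : ℝ) * (2 * δ / 5 - ((s : ℝ) - 1)) ≤ α * δ) :
    (s : ℝ) ≤ 3 * α ∨ δ / 5 ≤ (s : ℝ) :=
  stmt_1_general δ α hα hδα s hs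
end

section
/- Let G be a simple graph on n vertices and λ a positive integer. Define forests F₁, …, F_λ where F_i is a maximal spanning forest of G minus the edges of F₁, …, F_{i−1}, and let H = F₁ ∪ ⋯ ∪ F_λ. Then H has at most λ·n edges, and for every vertex set S with |∂_G S| ≤ λ we have ∂_G S = ∂_H S (every edge of G crossing S lies in H). -/
/-!
Each `F i` is a forest, so it has fewer than `n` edges. If an edge `ab` of `G` crossing `S`
lies in none of the forests, then it is an edge of every residual graph `G \ (F₀ ∪ ⋯ ∪ F_{i-1})`,
so by maximality each `F i` connects `a` and `b` and therefore contains an edge crossing `S`.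
The forests are edge-disjoint, so together with `ab` they give `λ + 1` distinct crossing edges.
-/

open Function

namespace SimpleGraph

variable {V : Type*}

theorem IsAcyclic.ncard_edgeSet_le [Fintype V] {F : SimpleGraph V} (hF : F.IsAcyclic) :
    F.edgeSet.ncard ≤ Fintype.card V := by
  classical
  cases isEmpty_or_nonempty V
  · simp [Set.eq_empty_of_isEmpty F.edgeSet]
  obtain ⟨T, hFT, hT⟩ := (⊤ : SimpleGraph V).exists_maximal_isAcyclic_of_le_isAcyclic le_top hF
  have hTree : T.IsTree := maximal_isAcyclic_iff_isTree.mp (by simpa using hT)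
  have hcard := hTree.card_edgeFinset
  calc F.edgeSet.ncard ≤ T.edgeSet.ncard := Set.ncard_le_ncard (edgeSet_mono hFT)
    _ = T.edgeFinset.card := by rw [← coe_edgeFinset, Set.ncard_coe_finset]
    _ ≤ Fintype.card V := by omega

def cutEdges (G : SimpleGraph V) (S : Set V) : Set (Sym2 V) :=
  {e ∈ G.edgeSet | ∃ a b, e = s(a, b) ∧ a ∈ S ∧ b ∉ S}

theorem cutEdges_mono {G G' : SimpleGraph V} (h : G ≤ G') (S : Set V) :
    G.cutEdges S ⊆ G'.cutEdges S :=
  fun _ ⟨he, hcross⟩ ↦ ⟨edgeSet_mono h he, hcross⟩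

theorem Reachable.cutEdges_nonempty {G : SimpleGraph V} {S : Set V} {a b : V}
    (h : G.Reachable a b) (ha : a ∈ S) (hb : b ∉ S) : (G.cutEdges S).Nonempty := by
  obtain ⟨p⟩ := h
  obtain ⟨d, -, hd₁, hd₂⟩ := p.exists_boundary_dart S ha hb
  exact ⟨d.edge, d.adj, d.fst, d.snd, rfl, hd₁, hd₂⟩

theorem card_lt_ncard_cutEdges [Finite V] {ι : Type*} [Finite ι] {G : SimpleGraph V}
    {S : Set V} (F : ι → SimpleGraph V) (hFG : ∀ i, F i ≤ G) (hdisj : Pairwise (Disjoint on F))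
    (hcross : ∀ i, ((F i).cutEdges S).Nonempty) {e : Sym2 V} (he : e ∈ G.cutEdges S)
    (heF : ∀ i, e ∉ (F i).edgeSet) : Nat.card ι < (G.cutEdges S).ncard := by
  choose f hf using hcross
  have hinj : Set.InjOn f Set.univ := by
    intro i _ j _ hij
    by_contra hne
    exact (disjoint_edgeSet.mpr (hdisj hne)).ne_of_mem (hf i).1 (hf j).1 hij
  calc Nat.card ι = (Set.univ : Set ι).ncard := Set.ncard_univ ι |>.symm
    _ ≤ (G.cutEdges S \ {e}).ncard := by
        refine Set.ncard_le_ncard_of_injOn f (fun i _ ↦ ⟨cutEdges_mono (hFG i) S (hf i), ?_⟩) hinj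
        rintro rfl
        exact heF i (hf i).1
    _ < (G.cutEdges S).ncard := Set.ncard_sdiff_singleton_lt_of_mem he

variable {n : ℕ}

def residual (G : SimpleGraph V) (F : Fin n → SimpleGraph V) (i : Fin n) : SimpleGraph V :=
  G \ ⨆ j : Fin n, if (j : ℕ) < (i : ℕ) then F j else ⊥

theorem pairwise_disjoint_of_le_residual {G : SimpleGraph V} {F : Fin n → SimpleGraph V}
    (hle : ∀ i, F i ≤ G.residual F i) : Pairwise (Disjoint on F) := by
  have key : ∀ i j : Fin n, i < j → Disjoint (F i) (F j) := fun i j hij ↦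
    (disjoint_sdiff_self_right.mono_left (le_iSup_of_le i (by simp [hij]))).mono_right (hle j)
  intro i j hne
  rcases lt_or_gt_of_ne hne with h | h
  · exact key i j h
  · exact (key j i h).symm

theorem residual_adj {G : SimpleGraph V} {F : Fin n → SimpleGraph V} (i : Fin n) {a b : V}
    (hab : G.Adj a b) (hF : ∀ j, ¬ (F j).Adj a b) : (G.residual F i).Adj a b := by
  refine ⟨hab, ?_⟩
  simp only [iSup_adj, not_exists]
  intro j
  split_ifs
  · exact hF j
  · exact id

end SimpleGraph

open SimpleGraph

theorem stmt_7_general {V : Type*} [Fintype V]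
    (G : SimpleGraph V) (lam : ℕ)
    (F : Fin lam → SimpleGraph V)
    (hle : ∀ i : Fin lam, F i ≤ G \ (⨆ j : Fin lam, if (j : ℕ) < (i : ℕ) then F j else ⊥))
    (hforest : ∀ i, (F i).IsAcyclic)
    (hmax : ∀ i : Fin lam, ∀ F' : SimpleGraph V,
      F' ≤ G \ (⨆ j : Fin lam, if (j : ℕ) < (i : ℕ) then F j else ⊥) →
      F'.IsAcyclic → F i ≤ F' → F' = F i)
    (H : SimpleGraph V) (hH : H = ⨆ i, F i) :
    H.edgeSet.ncard ≤ lam * Fintype.card V ∧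
    ∀ S : Set V,
      {e ∈ G.edgeSet | ∃ a b, e = s(a, b) ∧ a ∈ S ∧ b ∉ S}.ncard ≤ lam →
      {e ∈ G.edgeSet | ∃ a b, e = s(a, b) ∧ a ∈ S ∧ b ∉ S}
        = {e ∈ H.edgeSet | ∃ a b, e = s(a, b) ∧ a ∈ S ∧ b ∉ S} := by
  subst hH
  have hFG (i : Fin lam) : F i ≤ G := (hle i).trans sdiff_le
  refine ⟨?_, fun S hS ↦ ?_⟩
  · calc (⨆ i, F i).edgeSet.ncard ≤ ∑ i, (F i).edgeSet.ncard := by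
          rw [edgeSet_iSup]; exact Set.ncard_iUnion_le_of_fintype _
      _ ≤ ∑ _i : Fin lam, Fintype.card V :=
          Finset.sum_le_sum fun i _ ↦ (hforest i).ncard_edgeSet_le
      _ = lam * Fintype.card V := by simp
  change G.cutEdges S = (⨆ i, F i).cutEdges S
  refine subset_antisymm (fun e he ↦ ?_) (cutEdges_mono (iSup_le hFG) S)
  by_contra heH
  obtain ⟨hab, a, b, rfl, ha, hb⟩ := he
  have hnotF (i : Fin lam) : ¬ (F i).Adj a b := fun h ↦ heH ⟨le_iSup F i h, a, b, rfl, ha, hb⟩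
  have hmaximal (i : Fin lam) : Maximal (fun K ↦ K ≤ G.residual F i ∧ K.IsAcyclic) (F i) :=
    ⟨⟨hle i, hforest i⟩, fun K hK hFK ↦ (hmax i K hK.1 hK.2 hFK).le⟩
  have hreach (i : Fin lam) : (F i).Reachable a b := by
    rw [reachable_eq_of_maximal_isAcyclic _ (hmaximal i)]
    exact (residual_adj i hab hnotF).reachable
  have hlt := card_lt_ncard_cutEdges F hFG (pairwise_disjoint_of_le_residual hle)
    (fun i ↦ (hreach i).cutEdges_nonempty ha hb) ⟨hab, a, b, rfl, ha, hb⟩ hnotF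
  simp only [Nat.card_eq_fintype_card, Fintype.card_fin] at hlt
  exact absurd hS hlt.not_ge

/-- Nagamochi–Ibaraki sparsification: let `F i` (for `i < lam`) be a maximal spanning
forest of `G` minus the edges of the previous forests, and `H` their union. Then `H`
has at most `lam · n` edges, and every cut of `G` of size at most `lam` is preserved:
all its crossing edges lie in `H`. -/
theorem stmt_7 {V : Type*} [Fintype V] [DecidableEq V]
    (G : SimpleGraph V) (lam : ℕ) (hlam : 1 ≤ lam)
    (F : Fin lam → SimpleGraph V)
    (hle : ∀ i : Fin lam, F i ≤ G \ (⨆ j : Fin lam, if (j : ℕ) < (i : ℕ) then F j else ⊥))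
    (hforest : ∀ i, (F i).IsAcyclic)
    (hmax : ∀ i : Fin lam, ∀ F' : SimpleGraph V,
      F' ≤ G \ (⨆ j : Fin lam, if (j : ℕ) < (i : ℕ) then F j else ⊥) →
      F'.IsAcyclic → F i ≤ F' → F' = F i)
    (H : SimpleGraph V) (hH : H = ⨆ i, F i) :
    H.edgeSet.ncard ≤ lam * Fintype.card V ∧
    ∀ S : Set V,
      {e ∈ G.edgeSet | ∃ a b, e = s(a, b) ∧ a ∈ S ∧ b ∉ S}.ncard ≤ lam →
      {e ∈ G.edgeSet | ∃ a b, e = s(a, b) ∧ a ∈ S ∧ b ∉ S}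
        = {e ∈ H.edgeSet | ∃ a b, e = s(a, b) ∧ a ∈ S ∧ b ∉ S} :=
  stmt_7_general G lam F hle hforest hmax H hH
end

section
/- Let G = (V, E) be a multigraph with minimum k-cut value |OPT|, and let S₁, …, S_{k+1} be any partition of V into k+1 nonempty parts. Then |OPT| ≤ (1 − 1/C(k+1,2)) · |E[S₁, …, S_{k+1}]|, where E[S₁, …, S_{k+1}] is the set of edges with endpoints in two different parts. -/
/-- `P` is a partition of the vertex set into `k` nonempty parts. -/
def IsPartitionOn {V : Type*} (k : ℕ) (P : Fin k → Finset V) : Prop :=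
  (∀ i, (P i).Nonempty) ∧ (∀ i j, i ≠ j → Disjoint (P i) (P j)) ∧ ∀ v : V, ∃ i, v ∈ P i

/-- The number of edges of the multigraph (edge identifiers `ι`, endpoints `ends`)
crossing between different parts of the partition `P`. -/
def cutVal {V ι : Type*} [Fintype ι] [DecidableEq V] {k : ℕ} (ends : ι → V × V)
    (P : Fin k → Finset V) : ℕ :=
  (Finset.univ.filter fun e : ι => ∀ i, ¬((ends e).1 ∈ P i ∧ (ends e).2 ∈ P i)).card

/-!
Label every vertex by the index of its part. Merging two parts `i ≠ j` yields a `k`-cut which cuts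
exactly the previously crossing edges except those between `S i` and `S j`. Every crossing edge
runs between exactly one of the `C(k+1,2)` unordered pairs of parts, so by pigeonhole some pair
carries at least a `1 / C(k+1,2)` fraction of them; merging that pair proves the bound.
-/

open Finset

section Labelling

variable {α : Type*} [DecidableEq α]

def mergeLabel (i j a : α) : α :=
  if a = j then i else a

lemma mergeLabel_ne_mergeLabel_iff {i j : α} (hij : i ≠ j) (a b : α) :
    mergeLabel i j a ≠ mergeLabel i j b ↔ a ≠ b ∧ s(a, b) ≠ s(i, j) := by
  unfold mergeLabel
  split_ifs <;> aesop

lemma image_mergeLabel_comp {V : Type*} [Fintype V] [Fintype α] {c : V → α}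
    (hc : Function.Surjective c) {i j : α} (hij : i ≠ j) :
    univ.image (mergeLabel i j ∘ c) = univ.erase j := by
  ext a
  simp only [mem_image, mem_univ, true_and, and_true, mem_erase, Function.comp_apply, mergeLabel]
  constructor
  · rintro ⟨v, hv⟩
    split_ifs at hv <;> grind
  · intro ha
    obtain ⟨v, rfl⟩ := hc a
    exact ⟨v, if_neg ha⟩

variable {V ι : Type*} [Fintype ι] (ends : ι → V × V) (c : V → α)

def crossingEdges : Finset ι :=
  {e | c (ends e).1 ≠ c (ends e).2}

def edgesBetween (i j : α) : Finset ι :=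
  {e | s(c (ends e).1, c (ends e).2) = s(i, j)}

variable {ends c} {i j : α}

lemma edgesBetween_subset_crossingEdges (hij : i ≠ j) :
    edgesBetween ends c i j ⊆ crossingEdges ends c := by
  intro e he
  simp only [edgesBetween, crossingEdges, mem_filter, mem_univ, true_and] at he ⊢
  intro hsame
  exact hij (Sym2.mk_isDiag_iff.mp (he ▸ Sym2.mk_isDiag_iff.mpr hsame))

lemma filter_crossingEdges_eq_edgesBetween (hij : i ≠ j) :
    {e ∈ crossingEdges ends c | s(c (ends e).1, c (ends e).2) = s(i, j)} =
      edgesBetween ends c i j := by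
  ext e
  rw [mem_filter]
  exact ⟨fun h => by simpa [edgesBetween] using h.2,
    fun h => ⟨edgesBetween_subset_crossingEdges hij h, by simpa [edgesBetween] using h⟩⟩

lemma crossingEdges_mergeLabel_comp (hij : i ≠ j) :
    crossingEdges ends (mergeLabel i j ∘ c) =
      {e ∈ crossingEdges ends c | s(c (ends e).1, c (ends e).2) ≠ s(i, j)} := by
  ext e
  simp only [crossingEdges, mem_filter, mem_univ, true_and, Function.comp_apply,
    mergeLabel_ne_mergeLabel_iff hij]

lemma card_crossingEdges_mergeLabel_comp_add (hij : i ≠ j) :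
    #(crossingEdges ends (mergeLabel i j ∘ c)) + #(edgesBetween ends c i j) =
      #(crossingEdges ends c) := by
  rw [crossingEdges_mergeLabel_comp hij, ← filter_crossingEdges_eq_edgesBetween hij, add_comm]
  exact card_filter_add_card_filter_not _

variable (ends c) in
lemma exists_ne_card_crossingEdges_le [Fintype α] [Nontrivial α] :
    ∃ i j, i ≠ j ∧ (#(crossingEdges ends c) : ℝ) ≤
      (Fintype.card α).choose 2 * #(edgesBetween ends c i j) := by
  set pairs : Finset (Sym2 α) := {z | ¬z.IsDiag}
  have hpairs : #pairs = (Fintype.card α).choose 2 := by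
    rw [← Sym2.card_subtype_not_diag, Fintype.card_subtype]
  have hmaps : ∀ e ∈ crossingEdges ends c, s(c (ends e).1, c (ends e).2) ∈ pairs := by
    intro e he
    simpa [pairs, crossingEdges] using he
  obtain ⟨a, b, hab⟩ := exists_pair_ne α
  have hne : pairs.Nonempty := ⟨s(a, b), by simpa [pairs] using hab⟩
  have hpos : (0 : ℝ) < #pairs := by exact_mod_cast hne.card_pos
  obtain ⟨z, hz, hle⟩ := exists_le_card_fiber_of_nsmul_le_card_of_maps_to hmaps hne
    (b := (#(crossingEdges ends c) : ℝ) / #pairs)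
    (by rw [nsmul_eq_mul, mul_div_cancel₀ _ hpos.ne'])
  induction z using Sym2.ind with
  | h i j =>
    have hij : i ≠ j := by simpa [pairs] using hz
    refine ⟨i, j, hij, ?_⟩
    rwa [div_le_iff₀' hpos, hpairs, filter_crossingEdges_eq_edgesBetween hij] at hle

end Labelling

section Partition

variable {V ι : Type*}

lemma IsPartitionOn.eq_of_mem {k : ℕ} {P : Fin k → Finset V} (hP : IsPartitionOn k P) {v : V}
    {i j : Fin k} (hi : v ∈ P i) (hj : v ∈ P j) : i = j := by
  by_contra hij
  exact disjoint_left.mp (hP.2.1 i j hij) hi hj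

lemma IsPartitionOn.surjective_of_mem {k : ℕ} {P : Fin k → Finset V} (hP : IsPartitionOn k P)
    {c : V → Fin k} (hc : ∀ v, v ∈ P (c v)) : Function.Surjective c := by
  intro i
  obtain ⟨v, hv⟩ := hP.1 i
  exact ⟨v, hP.eq_of_mem (hc v) hv⟩

lemma IsPartitionOn.cutVal_eq [DecidableEq V] [Fintype ι] {k : ℕ} {P : Fin k → Finset V}
    (hP : IsPartitionOn k P) (ends : ι → V × V) {c : V → Fin k} (hc : ∀ v, v ∈ P (c v)) :
    cutVal ends P = #(crossingEdges ends c) := by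
  unfold cutVal crossingEdges
  congr 1
  refine filter_congr fun e _ => ⟨fun h hsame => h _ ⟨hc _, hsame ▸ hc _⟩, ?_⟩
  rintro hne i ⟨hu, hv⟩
  exact hne ((hP.eq_of_mem (hc _) hu).trans (hP.eq_of_mem (hc _) hv).symm)

lemma isPartitionOn_fibers [Fintype V] {k : ℕ} {g : V → Fin k} (hg : Function.Surjective g) :
    IsPartitionOn k fun i => {v | g v = i} := by
  refine ⟨fun i => ?_, fun i j hij => ?_, fun v => ⟨g v, by simp⟩⟩
  · obtain ⟨v, hv⟩ := hg i
    exact ⟨v, by simpa using hv⟩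
  · rw [disjoint_filter]
    rintro v - rfl
    exact hij

lemma exists_isPartitionOn_cutVal_eq [Fintype V] [DecidableEq V] [Fintype ι] {α : Type*}
    [DecidableEq α] (ends : ι → V × V) (c : V → α) {k : ℕ} (hc : #(univ.image c) = k) :
    ∃ P : Fin k → Finset V, IsPartitionOn k P ∧ cutVal ends P = #(crossingEdges ends c) := by
  let e : univ.image c ≃ Fin k := Fintype.equivFinOfCardEq (by simpa using hc)
  let g : V → Fin k := fun v => e ⟨c v, mem_image_of_mem c (mem_univ v)⟩
  have hg : Function.Surjective g := by
    intro i
    obtain ⟨⟨a, ha⟩, rfl⟩ := e.surjective i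
    obtain ⟨v, -, rfl⟩ := mem_image.mp ha
    exact ⟨v, rfl⟩
  refine ⟨_, isPartitionOn_fibers hg, ?_⟩
  rw [(isPartitionOn_fibers hg).cutVal_eq ends (c := g) (by simp)]
  unfold crossingEdges
  simp [g, e.apply_eq_iff_eq]

end Partition

/-- Claim 2.8 of Gupta–Lee–Li: for any partition of the vertices of a multigraph into
`k+1` nonempty parts, the minimum `k`-cut value `opt` satisfies
`opt ≤ (1 − 1/C(k+1,2)) · |E[S₁,…,S_{k+1}]|`. -/
theorem stmt_8 {V ι : Type*} [Fintype V] [DecidableEq V] [Fintype ι]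
    (ends : ι → V × V) (k : ℕ) (hk : 1 ≤ k) (opt : ℕ)
    (hopt : IsLeast
      {c : ℕ | ∃ P : Fin k → Finset V, IsPartitionOn k P ∧ c = cutVal ends P} opt)
    (S : Fin (k + 1) → Finset V) (hS : IsPartitionOn (k + 1) S) :
    (opt : ℝ) ≤ (1 - 1 / ((k + 1).choose 2 : ℝ)) * (cutVal ends S : ℝ) := by
  choose c hc using hS.2.2
  have : Nontrivial (Fin (k + 1)) := Fin.nontrivial_iff_two_le.mpr (by omega)
  obtain ⟨i, j, hij, hpair⟩ := exists_ne_card_crossingEdges_le ends c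
  rw [Fintype.card_fin] at hpair
  obtain ⟨P, hP, hPcut⟩ := exists_isPartitionOn_cutVal_eq ends (mergeLabel i j ∘ c) (k := k)
    (by simp [image_mergeLabel_comp (hS.surjective_of_mem hc) hij])
  have hopt_le : (opt : ℝ) ≤ #(crossingEdges ends (mergeLabel i j ∘ c)) :=
    Nat.cast_le.mpr (hPcut ▸ hopt.2 ⟨P, hP, rfl⟩)
  have hsplit := card_crossingEdges_mergeLabel_comp_add (ends := ends) (c := c) hij
  have hC : (0 : ℝ) < (k + 1).choose 2 := by exact_mod_cast Nat.choose_pos (by omega)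
  rw [hS.cutVal_eq ends hc, ← hsplit, one_sub_div hC.ne', div_mul_eq_mul_div, le_div_iff₀ hC]
  rw [← hsplit] at hpair
  push_cast at hpair ⊢
  nlinarith [mul_le_mul_of_nonneg_left hopt_le hC.le]
end

section
/- Every supervertex created by the Kawarabayashi–Thorup contraction procedure has Ω(δ²) edges of the original graph G contracted inside it; consequently, a graph G with m edges yields at most O(m/δ²) supervertices, and since every passive supervertex has degree at most 3αδ/γ with γ = 1/(100 log m), the total number of edges leaving passive supervertices is O(α·log m·m/δ). -/
/-! Disjointness makes the supervertices share the `m` original edges, so there are at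
most `m/(cδ²)` of them. With `γ = 1/(100 log m)` the passive degree bound `3αδ/γ` is
`300αδ log m`, and multiplying the two bounds gives `(300/c)·α·log m·m/δ`. -/

open Finset Function

theorem Fintype.card_mul_le_of_pairwise_disjoint {ι α : Type*} [Fintype ι] [Fintype α]
    (t : ι → Finset α) (hdisj : Pairwise (Disjoint on t)) {b : ℝ}
    (hb : ∀ i, b ≤ (t i).card) :
    (Fintype.card ι : ℝ) * b ≤ Fintype.card α := by
  classical
  have hunion : ∑ i, (t i).card ≤ Fintype.card α := by
    rw [← card_biUnion fun i _ j _ hij => hdisj hij]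
    exact card_le_univ _
  calc (Fintype.card ι : ℝ) * b = ∑ _i : ι, b := by simp [mul_comm]
    _ ≤ ∑ i, ((t i).card : ℝ) := sum_le_sum fun i _ => hb i
    _ ≤ Fintype.card α := by exact_mod_cast hunion

theorem Finset.sum_le_mul_of_card_le {ι : Type*} {s : Finset ι} {f : ι → ℝ} {N K : ℝ}
    (hK : 0 ≤ K) (hs : (s.card : ℝ) ≤ N) (hf : ∀ i ∈ s, f i ≤ K) :
    ∑ i ∈ s, f i ≤ N * K :=
  calc ∑ i ∈ s, f i ≤ s.card * K := by simpa using sum_le_card_nsmul s f K hf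
    _ ≤ N * K := mul_le_mul_of_nonneg_right hs hK

/-- Counting edges leaving passive supervertices: if every supervertex absorbs at least
`c·δ²` of the `m` original edges (pairwise disjointly), then there are at most
`O(m/(c·δ²))` supervertices; and since every passive supervertex has degree at most
`3αδ/γ` with `γ = 1/(100·log m)`, the total degree of passive supervertices is
`O((α/c)·log m·m/δ)`. -/
theorem stmt_18 : ∃ C : ℝ, 0 < C ∧
    ∀ (ι : Type) [Fintype ι] (m δ : ℕ) (α c γ : ℝ),
    2 ≤ m → 0 < δ → 1 ≤ α → 0 < c →
    γ = 1 / (100 * Real.logb 2 m) →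
    ∀ absorb : ι → Finset (Fin m),
      (∀ s t : ι, s ≠ t → Disjoint (absorb s) (absorb t)) →
      (∀ s : ι, c * (δ : ℝ) ^ 2 ≤ ((absorb s).card : ℝ)) →
    ((Fintype.card ι : ℝ) ≤ C * m / (c * (δ : ℝ) ^ 2)) ∧
    ∀ (deg : ι → ℝ) (passive : Finset ι),
      (∀ s, 0 ≤ deg s) →
      (∀ s ∈ passive, deg s ≤ 3 * α * δ / γ) →
      ∑ s ∈ passive, deg s ≤ (C / c) * α * Real.logb 2 m * m / δ := by
  refine ⟨300, by norm_num, ?_⟩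
  intro ι _ m δ α c γ hm hδ hα hc hγ absorb hdisj hcard
  have hlog : 0 ≤ Real.logb 2 m :=
    Real.logb_nonneg one_lt_two (by exact_mod_cast hm.trans' one_le_two)
  have hcardι : (Fintype.card ι : ℝ) ≤ m / (c * δ ^ 2) := by
    rw [le_div_iff₀ (by positivity)]
    simpa using Fintype.card_mul_le_of_pairwise_disjoint absorb hdisj hcard
  refine ⟨hcardι.trans (by gcongr; linarith), fun deg passive _ hpass => ?_⟩
  have hpassive : (passive.card : ℝ) ≤ m / (c * δ ^ 2) :=
    hcardι.trans' (by exact_mod_cast card_le_univ passive)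
  have hdegBound : 3 * α * δ / γ = 300 * α * δ * Real.logb 2 m := by
    rw [hγ]; field_simp; ring
  calc ∑ s ∈ passive, deg s ≤ m / (c * δ ^ 2) * (300 * α * δ * Real.logb 2 m) :=
        sum_le_mul_of_card_le (by positivity) hpassive fun s hs => hdegBound ▸ hpass s hs
    _ = 300 / c * α * Real.logb 2 m * m / δ := by field_simp
end
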